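/- Let χ : {1,…,n} → {ℓ,c,r} with χ⁻¹(c) ∩ {2,…,n−1} = {l₁ < ⋯ < l_m}, l₀ = 1, l_{m+1} = n. Let π = {V₁,…,V_t} ∈ IBNC(χ) and σ ∈ IBNC(χ) with σ ≤ π. Then for each block V_s, μ_{IBNC(χ|_{V_s})}(σ|_{V_s}, 1_{V_s}) = ∏_{i=1}^{m+1} μ_{IBNC(χ|_{α̃_i(V_s)})}(σ|_{α̃_i(V_s)}, 1_{α̃_i(V_s)}), where α̃_i(V_s) = V_s ∩ [l_{i−1}, l_i], 1_W denotes the partition of the set W into one block, and by convention μ(∅, 1_∅) = 1. -/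

import Mathlib

namespace FFB

/-- The three letters ℓ, c, r labelling the faces. -/
inductive Letter : Type where
  | l | c | r
deriving DecidableEq

/-- `x` is one of the letters `ℓ`, `c`. -/
def isLC (x : Letter) : Prop := x = Letter.l ∨ x = Letter.c

variable {α : Type*}

/-- The total order `≺_χ` on the index set determined by `χ`:
the elements of `χ⁻¹{ℓ,c}` in increasing order followed by the elements of
`χ⁻¹{r}` in decreasing order. -/
def chiLT [LT α] (χ : α → Letter) (i j : α) : Prop :=
  (isLC (χ i) ∧ isLC (χ j) ∧ i < j)
  ∨ (isLC (χ i) ∧ χ j = Letter.r)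
  ∨ (χ i = Letter.r ∧ χ j = Letter.r ∧ j < i)

/-- A partition (equivalence relation) `π` is `χ`-noncrossing if there is no quadruple
`s₁ ≺_χ r₁ ≺_χ s₂ ≺_χ r₂` with `s₁ ∼ s₂`, `r₁ ∼ r₂` lying in different blocks. -/
def ChiNoncrossing [LT α] (χ : α → Letter) (π : Setoid α) : Prop :=
  ∀ s₁ r₁ s₂ r₂ : α, chiLT χ s₁ r₁ → chiLT χ r₁ s₂ → chiLT χ s₂ r₂ →
    π s₁ s₂ → π r₁ r₂ → π s₁ r₁

/-- A partition `π` is `χ`-interval if whenever `i < j < k`, `i ∼ k` and `χ j = c`,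
then `i, j, k` all lie in the same block. -/
def ChiInterval [LT α] (χ : α → Letter) (π : Setoid α) : Prop :=
  ∀ i j k : α, i < j → j < k → χ j = Letter.c → π i k → π i j

/-- The set of interval-bi-noncrossing partitions with respect to `χ`. -/
def IBNC [LT α] (χ : α → Letter) : Set (Setoid α) :=
  {π | ChiNoncrossing χ π ∧ ChiInterval χ π}

/-- The set of `χ`-noncrossing partitions. -/
def NC [LT α] (χ : α → Letter) : Set (Setoid α) :=
  {π | ChiNoncrossing χ π}

/-- Restriction of a partition of `α` to a subset `V ⊆ α`. -/
def restrict (V : Set α) (σ : Setoid α) : Setoid V := Setoid.comap Subtype.val σ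

/-- Restriction of `χ` to a subset `V ⊆ α`. -/
def restChi (V : Set α) (χ : α → Letter) : V → Letter := fun x => χ x.1

/- `mu` is the Möbius function of the finite poset `P` (with the induced order):
it is the (two-sided) convolution inverse of the zeta function. -/
open Classical in
def IsMobius {β : Type*} [PartialOrder β] (P : Set β) (mu : β → β → ℂ) : Prop :=
  ∀ a ∈ P, ∀ b ∈ P, a ≤ b →
    ((∑ᶠ c ∈ {c | c ∈ P ∧ a ≤ c ∧ c ≤ b}, mu a c) = if a = b then 1 else 0) ∧
    ((∑ᶠ c ∈ {c | c ∈ P ∧ a ≤ c ∧ c ≤ b}, mu c b) = if a = b then 1 else 0)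

section Moments

variable {A : Type*} [Ring A] [LinearOrder α] [Finite α]

/-- `φ_V(z₁,…,zₙ) = φ(z_{l₁} ⋯ z_{l_k})` where `V = {l₁ < ⋯ < l_k}`. -/
noncomputable def phiV (φ : A → ℂ) (z : α → A) (V : Set α) : ℂ :=
  φ (((Set.toFinite V).toFinset.sort (· ≤ ·)).map z).prod

/-- `φ_σ(z₁,…,zₙ) = ∏_{V ∈ σ} φ_V(z₁,…,zₙ)`. -/
noncomputable def phiPart (φ : A → ℂ) (z : α → A) (σ : Setoid α) : ℂ :=
  ∏ᶠ q : Quotient σ, phiV φ z {y | Quotient.mk σ y = q}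

/-- The free-free-Boolean cumulant
`κ_{χ,π}(z₁,…,zₙ) = Σ_{σ ∈ IBNC(χ), σ ≤ π} μ_{IBNC(χ)}(σ,π) φ_σ(z₁,…,zₙ)`,
where `mu` is (a function which is) the Möbius function of `IBNC(χ)`. -/
noncomputable def cum (φ : A → ℂ) (χ : α → Letter)
    (mu : Setoid α → Setoid α → ℂ) (z : α → A) (π : Setoid α) : ℂ :=
  ∑ᶠ σ ∈ {σ | σ ∈ IBNC χ ∧ σ ≤ π}, mu σ π * phiPart φ z σ

end Moments

/-- Combinatorial free-free-Boolean independence: mixed cumulants vanish.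
`F i x` is the face of the `i`-th triple labelled by the letter `x`. -/
def CombFFB {A : Type*} [Ring A] [Algebra ℂ A] (φ : A →ₗ[ℂ] ℂ) {I : Type*}
    (F : I → Letter → NonUnitalSubalgebra ℂ A) : Prop :=
  ∀ (n : ℕ) (χ : Fin n → Letter) (ω : Fin n → I) (z : Fin n → A),
    (∀ k, z k ∈ F (ω k) (χ k)) → (¬ ∃ i, ∀ k, ω k = i) →
    ∀ mu : Setoid (Fin n) → Setoid (Fin n) → ℂ, IsMobius (IBNC χ) mu →
      cum (⇑φ) χ mu z ⊤ = 0

end FFB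


/-!
Restriction to the pieces `α̃ᵢ(V)` maps the upper interval `[σ|_V, 1_V]` of `IBNC(χ|_V)`
isomorphically onto the product of the upper intervals `[σ|_{α̃ᵢ(V)}, 1]`, and the Möbius function
to the top element is multiplicative under such an isomorphism. The map is an order embedding
because a block of an interval partition that straddles an inner junction `lᵢ` (a `c`-point)
contains it, so the partition is recovered from its restrictions by chaining through the
junctions. It is onto because partitions of the pieces glue along the shared junctions to an
interval partition of `V`; this is noncrossing since, for `≺_χ`, the two sides of a junction are
arcs that meet only in the junction.
-/

namespace FFB

instance {β : Type*} [Finite β] : Finite (Setoid β) :=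
  Finite.of_injective _ fun _ _ => Setoid.eq_iff_rel_eq.2

section Mobius

variable {β : Type*} [PartialOrder β]

theorem eqOn_of_finsum_mem_Ici_eq [Finite β] {M : Type*} [AddCancelCommMonoid M]
    {P : Set β} {f g : β → M}
    (h : ∀ a ∈ P, ∑ᶠ c ∈ {c | c ∈ P ∧ a ≤ c}, f c = ∑ᶠ c ∈ {c | c ∈ P ∧ a ≤ c}, g c) :
    Set.EqOn f g P := by
  intro a
  induction a using (Finite.to_wellFoundedGT (α := β)).wf.induction with
  | _ a ih =>
  intro ha
  have hsplit : {c | c ∈ P ∧ a ≤ c} = insert a {c | c ∈ P ∧ a < c} := by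
    ext c
    simp only [Set.mem_insert_iff, Set.mem_ofPred_eq, le_iff_eq_or_lt]
    grind
  have hnot : a ∉ {c | c ∈ P ∧ a < c} := fun hc => hc.2.false
  have hfin : {c | c ∈ P ∧ a < c}.Finite := Set.toFinite _
  have hrest : ∑ᶠ c ∈ {c | c ∈ P ∧ a < c}, f c = ∑ᶠ c ∈ {c | c ∈ P ∧ a < c}, g c :=
    finsum_mem_congr rfl fun c hc => ih c hc.2 hc.1
  have := h a ha
  rw [hsplit, finsum_mem_insert _ hnot hfin, finsum_mem_insert _ hnot hfin, hrest] at this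
  exact add_right_cancel this

theorem finsum_mem_univ_pi_prod {ι : Type*} [Fintype ι] {γ : ι → Type*} {M : Type*}
    [CommSemiring M] {T : ∀ i, Set (γ i)} (hT : ∀ i, (T i).Finite) (g : ∀ i, γ i → M) :
    ∑ᶠ x ∈ Set.univ.pi T, ∏ i, g i (x i) = ∏ i, ∑ᶠ d ∈ T i, g i d := by
  classical
  have hpi : Set.univ.pi T = ↑(Fintype.piFinset fun i => (hT i).toFinset) := by
    simp [Fintype.coe_piFinset]
  rw [hpi, finsum_mem_coe_finset, ← Finset.prod_univ_sum]
  exact Finset.prod_congr rfl fun i _ => (finsum_mem_eq_finite_toFinset_sum _ (hT i)).symm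

theorem IsMobius.apply_top_eq_prod [OrderTop β] [Finite β] {ι : Type*} [Fintype ι]
    {γ : ι → Type*} [∀ i, PartialOrder (γ i)] [∀ i, OrderTop (γ i)] [∀ i, Finite (γ i)]
    {P : Set β} {Q : ∀ i, Set (γ i)} {f : ∀ i, β → γ i}
    {mu : β → β → ℂ} {nu : ∀ i, γ i → γ i → ℂ}
    (hmu : IsMobius P mu) (hnu : ∀ i, IsMobius (Q i) (nu i))
    (htopP : ⊤ ∈ P) (htopQ : ∀ i, ⊤ ∈ Q i)
    (hmaps : ∀ a ∈ P, ∀ i, f i a ∈ Q i)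
    (hle_iff : ∀ a ∈ P, ∀ b ∈ P, a ≤ b ↔ ∀ i, f i a ≤ f i b)
    (hsurj : ∀ a ∈ P, ∀ d : ∀ i, γ i, (∀ i, d i ∈ Q i ∧ f i a ≤ d i) →
      ∃ c ∈ P, a ≤ c ∧ ∀ i, f i c = d i)
    {a : β} (ha : a ∈ P) :
    mu a ⊤ = ∏ i, nu i (f i a) ⊤ := by
  classical
  refine eqOn_of_finsum_mem_Ici_eq (f := fun c => mu c ⊤) (g := fun c => ∏ i, nu i (f i c) ⊤)
    (fun a ha => ?_) ha
  have hmu_top : ∑ᶠ c ∈ {c | c ∈ P ∧ a ≤ c}, mu c ⊤ = if a = ⊤ then 1 else 0 := by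
    simpa only [le_top, and_true] using (hmu a ha ⊤ htopP le_top).2
  have hnu_top : ∀ i, ∑ᶠ d ∈ {d | d ∈ Q i ∧ f i a ≤ d}, nu i d ⊤ = if f i a = ⊤ then 1 else 0 :=
    fun i => by simpa only [le_top, and_true] using (hnu i _ (hmaps a ha i) ⊤ (htopQ i) le_top).2
  have hbij : Set.BijOn (fun c i => f i c) {c | c ∈ P ∧ a ≤ c}
      (Set.univ.pi fun i => {d | d ∈ Q i ∧ f i a ≤ d}) := by
    refine ⟨fun c hc i _ => ⟨hmaps c hc.1 i, (hle_iff a ha c hc.1).1 hc.2 i⟩, ?_, ?_⟩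
    · intro c hc c' hc' hcc'
      exact le_antisymm ((hle_iff c hc.1 c' hc'.1).2 fun i => (congrFun hcc' i).le)
        ((hle_iff c' hc'.1 c hc.1).2 fun i => (congrFun hcc' i).ge)
    · intro d hd
      obtain ⟨c, hc, hac, hcd⟩ := hsurj a ha d fun i => hd i (Set.mem_univ i)
      exact ⟨c, ⟨hc, hac⟩, funext hcd⟩
  have hftop : ∀ i, f i ⊤ = ⊤ := by
    obtain ⟨c, -, hc, hfc⟩ := hsurj ⊤ htopP (fun _ => ⊤) fun i => ⟨htopQ i, le_top⟩
    intro i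
    rw [← hfc i, top_le_iff.1 hc]
  have htop_iff : a = ⊤ ↔ ∀ i, f i a = ⊤ := by
    refine ⟨fun h i => h ▸ hftop i, fun h => top_le_iff.1 ?_⟩
    exact (hle_iff ⊤ htopP a ha).2 fun i => ((hftop i).trans (h i).symm).le
  rw [hmu_top, finsum_mem_eq_of_bijOn (g := fun d => ∏ i, nu i (d i) ⊤) _ hbij fun _ _ => rfl,
    finsum_mem_univ_pi_prod (fun i => Set.toFinite _) fun i d => nu i d ⊤]
  simp only [hnu_top, Fintype.prod_boole, htop_iff]

end Mobius

theorem top_mem_IBNC {α : Type*} [LT α] (χ : α → Letter) : (⊤ : Setoid α) ∈ IBNC χ :=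
  ⟨fun _ _ _ _ _ _ _ _ _ => trivial, fun _ _ _ _ _ _ _ => trivial⟩

theorem comap_mem_IBNC {β γ : Type*} [Preorder β] [Preorder γ] {e : β → γ} (he : StrictMono e)
    {χ : γ → Letter} {σ : Setoid γ} (h : σ ∈ IBNC χ) : σ.comap e ∈ IBNC (χ ∘ e) := by
  have hlt : ∀ {x y}, chiLT (χ ∘ e) x y → chiLT χ (e x) (e y) := by
    rintro x y (⟨hx, hy, hxy⟩ | hxy | ⟨hx, hy, hxy⟩)
    exacts [Or.inl ⟨hx, hy, he hxy⟩, Or.inr (Or.inl hxy), Or.inr (Or.inr ⟨hx, hy, he hxy⟩)]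
  exact ⟨fun _ _ _ _ h₁ h₂ h₃ => h.1 _ _ _ _ (hlt h₁) (hlt h₂) (hlt h₃),
    fun _ _ _ hij hjk => h.2 _ _ _ (he hij) (he hjk)⟩

section Glue

variable {α : Type*}

def extendBySingletons {s : Set α} (d : Setoid s) : Setoid α where
  r x y := x = y ∨ ∃ (hx : x ∈ s) (hy : y ∈ s), d ⟨x, hx⟩ ⟨y, hy⟩
  iseqv := by
    refine ⟨fun _ => Or.inl rfl, ?_, ?_⟩
    · rintro x y (rfl | ⟨hx, hy, h⟩)
      exacts [Or.inl rfl, Or.inr ⟨hy, hx, d.symm h⟩]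
    · rintro x y z (rfl | ⟨hx, hy, h⟩) (rfl | ⟨hy', hz, h'⟩)
      exacts [Or.inl rfl, Or.inr ⟨_, _, h'⟩, Or.inr ⟨_, _, h⟩, Or.inr ⟨hx, hz, d.trans h h'⟩]

theorem extendBySingletons_iff {s : Set α} (d : Setoid s) {x y : α} (hx : x ∈ s) (hy : y ∈ s) :
    extendBySingletons d x y ↔ d ⟨x, hx⟩ ⟨y, hy⟩ := by
  refine ⟨?_, fun h => Or.inr ⟨hx, hy, h⟩⟩
  rintro (rfl | ⟨_, _, h⟩)
  exacts [d.refl _, h]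

variable [LinearOrder α] {m : ℕ} (V : Set α) (l : Fin (m + 2) → α)

def piece (i : Fin (m + 1)) : Set α := V ∩ Set.Icc (l i.castSucc) (l i.succ)

def toPiece (i : Fin (m + 1)) (ρ : Setoid V) : Setoid (piece V l i) :=
  ρ.comap (Set.inclusion Set.inter_subset_left)

def clamp (i : Fin (m + 1)) (x : α) : α := max (l i.castSucc) (min x (l i.succ))

def glue (d : ∀ i, Setoid (piece V l i)) : Setoid V where
  r a b := ∀ i, extendBySingletons (d i) (clamp l i a) (clamp l i b)
  iseqv := ⟨fun _ _ => Setoid.refl' _ _, fun h i => Setoid.symm' _ (h i),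
    fun h h' i => Setoid.trans' _ (h i) (h' i)⟩

def IntervalAt (ρ : Setoid V) : Prop :=
  ∀ a t b : V, (∃ p, t.1 = l p) → a < t → t < b → ρ a b → ρ a t

variable {V l}

theorem toPiece_mem_IBNC {χ : α → Letter} {ρ : Setoid V} (i : Fin (m + 1))
    (h : ρ ∈ IBNC (restChi V χ)) : toPiece V l i ρ ∈ IBNC (restChi (piece V l i) χ) :=
  comap_mem_IBNC (e := Set.inclusion Set.inter_subset_left) (fun _ _ h => h) h

theorem clamp_eq_right (hl : Monotone l) {i : Fin (m + 1)} {x : α} (hx : l i.succ ≤ x) :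
    clamp l i x = l i.succ := by
  rw [clamp, min_eq_right hx, max_eq_right (hl (Fin.castSucc_le_succ i))]

theorem clamp_eq_left (hl : Monotone l) {i : Fin (m + 1)} {x : α} (hx : x ≤ l i.castSucc) :
    clamp l i x = l i.castSucc := by
  rw [clamp, min_eq_left (hx.trans (hl (Fin.castSucc_le_succ i))), max_eq_left hx]

theorem clamp_eq_self {i : Fin (m + 1)} {x : α} (hx : x ∈ Set.Icc (l i.castSucc) (l i.succ)) :
    clamp l i x = x := by
  rw [clamp, min_eq_left hx.2, max_eq_right hx.1]

theorem clamp_eq_clamp_of_ne (hl : Monotone l) {i j : Fin (m + 1)} (hji : j ≠ i) {x y : α}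
    (hx : x ∈ Set.Icc (l i.castSucc) (l i.succ)) (hy : y ∈ Set.Icc (l i.castSucc) (l i.succ)) :
    clamp l j x = clamp l j y := by
  rcases hji.lt_or_gt with h | h
  · have hle : l j.succ ≤ l i.castSucc := hl (Fin.succ_le_castSucc_iff.2 h)
    rw [clamp_eq_right hl (hle.trans hx.1), clamp_eq_right hl (hle.trans hy.1)]
  · have hle : l i.succ ≤ l j.castSucc := hl (Fin.succ_le_castSucc_iff.2 h)
    rw [clamp_eq_left hl (hx.2.trans hle), clamp_eq_left hl (hy.2.trans hle)]

theorem toPiece_glue (hl : Monotone l) (d : ∀ i, Setoid (piece V l i)) (i : Fin (m + 1)) :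
    toPiece V l i (glue V l d) = d i := by
  ext u v
  change (∀ j, _) ↔ _
  refine ⟨fun h => ?_, fun h j => ?_⟩
  · have hi := h i
    rw [clamp_eq_self u.2.2, clamp_eq_self v.2.2] at hi
    exact (extendBySingletons_iff _ u.2 v.2).1 hi
  · by_cases hji : j = i
    · subst hji
      rw [clamp_eq_self u.2.2, clamp_eq_self v.2.2]
      exact (extendBySingletons_iff _ u.2 v.2).2 h
    · rw [clamp_eq_clamp_of_ne hl hji u.2.2 v.2.2]

theorem intervalAt_glue (hl : Monotone l) (d : ∀ i, Setoid (piece V l i)) :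
    IntervalAt V l (glue V l d) := by
  rintro a t b ⟨p, hp⟩ (hat : a.1 < t.1) (htb : t.1 < b.1) h j
  rcases Fin.succ_le_or_le_castSucc p j with hjp | hpj
  · have ht : l j.succ ≤ t.1 := hp ▸ hl hjp
    rw [clamp_eq_right hl ht, ← clamp_eq_right hl (ht.trans htb.le)]
    exact h j
  · have ht : t.1 ≤ l j.castSucc := hp ▸ hl hpj
    rw [clamp_eq_left hl ht, ← clamp_eq_left hl (hat.le.trans ht)]

theorem exists_rel_or_same_side {ρ : Setoid V} {t : α}
    (hsplit : ∀ a b : V, a.1 < t → t < b.1 → ρ a b → ∃ h : t ∈ V, ρ a ⟨t, h⟩) {a b : V}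
    (hab : ρ a b) : (∃ h : t ∈ V, ρ a ⟨t, h⟩) ∨ (a.1 < t ∧ b.1 < t) ∨ (t < a.1 ∧ t < b.1) := by
  have self : ∀ x : V, x.1 = t → ∃ h : t ∈ V, x = ⟨t, h⟩ := fun x hx => ⟨hx ▸ x.2, Subtype.ext hx⟩
  by_cases hat : a.1 = t
  · obtain ⟨h, rfl⟩ := self a hat
    exact Or.inl ⟨h, ρ.refl _⟩
  by_cases hbt : b.1 = t
  · obtain ⟨h, rfl⟩ := self b hbt
    exact Or.inl ⟨h, hab⟩
  rcases lt_or_gt_of_ne hat with hat | hat <;> rcases lt_or_gt_of_ne hbt with hbt | hbt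
  · exact Or.inr (Or.inl ⟨hat, hbt⟩)
  · exact Or.inl (hsplit a b hat hbt hab)
  · obtain ⟨h, hbT⟩ := hsplit b a hbt hat (ρ.symm hab)
    exact Or.inl ⟨h, ρ.trans hab hbT⟩
  · exact Or.inr (Or.inr ⟨hat, hbt⟩)

theorem le_of_forall_toPiece_le (hl : Monotone l) (hl0 : ∀ x, l 0 ≤ x)
    (hlast : ∀ x, x ≤ l (Fin.last _)) (hV : ∀ a b : V, ∀ p, a.1 < l p → l p < b.1 → l p ∈ V)
    {ρ ρ' : Setoid V} (hρ : IntervalAt V l ρ) (h : ∀ i, toPiece V l i ρ ≤ toPiece V l i ρ') :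
    ρ ≤ ρ' := by
  suffices H : ∀ q : Fin (m + 2), ∀ a b : V, a.1 ≤ l q → b.1 ≤ l q → ρ a b → ρ' a b from
    fun a b => H (Fin.last _) a b (hlast _) (hlast _)
  intro q
  induction q using Fin.induction with
  | zero =>
    intro a b ha hb _
    rw [Subtype.ext ((ha.antisymm (hl0 _)).trans (hb.antisymm (hl0 _)).symm)]
  | succ q ih =>
    intro a b ha hb hab
    wlog hle : a.1 ≤ b.1 generalizing a b
    · exact ρ'.symm (this b a hb ha (ρ.symm hab) (le_of_not_ge hle))
    have hq := hl (Fin.castSucc_le_succ q)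
    by_cases hqa : l q.castSucc ≤ a.1
    · exact h q (x := ⟨a.1, a.2, hqa, ha⟩) (y := ⟨b.1, b.2, hqa.trans hle, hb⟩) hab
    by_cases hbq : b.1 ≤ l q.castSucc
    · exact ih a b (hle.trans hbq) hbq hab
    push Not at hqa hbq
    let t : V := ⟨l q.castSucc, hV a b _ hqa hbq⟩
    have hat : ρ a t := hρ a t b ⟨_, rfl⟩ hqa hbq hab
    exact ρ'.trans (ih a t hqa.le le_rfl hat)
      (h q (x := ⟨t.1, t.2, le_rfl, hq⟩) (y := ⟨b.1, b.2, hbq.le, hb⟩) (ρ.trans (ρ.symm hat) hab))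

end Glue

def ChiNoncrossingOn {α : Type*} [LT α] (χ : α → Letter) (ρ : Setoid α) (S : Set α) : Prop :=
  ∀ s₁ ∈ S, ∀ r₁ ∈ S, ∀ s₂ ∈ S, ∀ r₂ ∈ S, chiLT χ s₁ r₁ → chiLT χ r₁ s₂ → chiLT χ s₂ r₂ →
    ρ s₁ s₂ → ρ r₁ r₂ → ρ s₁ r₁

theorem chiNoncrossingOn_of_toPiece {α : Type*} [LinearOrder α] {m : ℕ} {V : Set α}
    {l : Fin (m + 2) → α} {χ : α → Letter} {ρ : Setoid V} {i : Fin (m + 1)}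
    (h : ChiNoncrossing (restChi (piece V l i) χ) (toPiece V l i ρ)) :
    ChiNoncrossingOn (restChi V χ) ρ {x | x.1 ∈ Set.Icc (l i.castSucc) (l i.succ)} :=
  fun s₁ hs₁ r₁ hr₁ s₂ hs₂ r₂ hr₂ =>
    h ⟨s₁, s₁.2, hs₁⟩ ⟨r₁, r₁.2, hr₁⟩ ⟨s₂, s₂.2, hs₂⟩ ⟨r₂, r₂.2, hr₂⟩

section Noncrossing

variable {n : ℕ}

def chiKey (χ : Fin n → Letter) (x : Fin n) : ℕ := if χ x = Letter.r then 2 * n - x else x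

theorem chiLT_restChi_iff {V : Set (Fin n)} {χ : Fin n → Letter} {x y : V} :
    chiLT (restChi V χ) x y ↔ chiKey χ x < chiKey χ y := by
  have := x.1.isLt; have := y.1.isLt
  change chiLT χ x.1 y.1 ↔ _
  unfold chiLT chiKey isLC
  cases χ x.1 <;> cases χ y.1 <;> simp [-Subtype.coe_lt_coe] <;> omega

theorem chiKey_cases {χ : Fin n → Letter} {t : Fin n} (ht : χ t = Letter.c) (x : Fin n) :
    (x < t ∧ (chiKey χ x < t ∨ 2 * n - t < chiKey χ x)) ∨ (x = t ∧ chiKey χ x = t) ∨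
      (t < x ∧ t < chiKey χ x ∧ chiKey χ x < 2 * n - t) := by
  have := x.isLt
  rcases lt_trichotomy x t with h | rfl | h
  · unfold chiKey; split_ifs <;> omega
  · simp [chiKey, ht]
  · unfold chiKey; split_ifs <;> omega

theorem ChiNoncrossingOn.rel_of_chiKey_lt {V : Set (Fin n)} {χ : Fin n → Letter}
    {ρ : Setoid V} {lo hi : Fin n}
    (h : ChiNoncrossingOn (restChi V χ) ρ {x | x.1 ∈ Set.Icc lo hi}) (a b c d : V)
    (hpos : lo ≤ a.1 ∧ lo ≤ b.1 ∧ lo ≤ c.1 ∧ lo ≤ d.1 ∧ a.1 ≤ hi ∧ b.1 ≤ hi ∧ c.1 ≤ hi ∧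
      d.1 ≤ hi ∧ chiKey χ a < chiKey χ b ∧ chiKey χ b < chiKey χ c ∧ chiKey χ c < chiKey χ d)
    (hac : ρ a c) (hbd : ρ b d) : ρ a b :=
  have ⟨h₁, h₂, h₃, h₄, h₅, h₆, h₇, h₈, hab, hbc, hcd⟩ := hpos
  h a ⟨h₁, h₅⟩ b ⟨h₂, h₆⟩ c ⟨h₃, h₇⟩ d ⟨h₄, h₈⟩
    (chiLT_restChi_iff.2 hab) (chiLT_restChi_iff.2 hbc) (chiLT_restChi_iff.2 hcd) hac hbd

/-- In `≺_χ` the points `x ≥ t` of a `c`-point `t` form the key interval `[t, 2n - t)`, so the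
arcs `[lo, t]` and `[t, hi]` meet only in `t`, and a crossing using both arcs is moved into one
of them by replacing one of its points by `t`. -/
theorem chiNoncrossingOn_Icc_of_split {V : Set (Fin n)} {χ : Fin n → Letter} {ρ : Setoid V}
    {lo t hi : Fin n} (hlo : lo ≤ t) (hhi : t ≤ hi) (ht : χ t = Letter.c)
    (hsplit : ∀ a b : V, a.1 < t → t < b.1 → ρ a b → ∃ h : t ∈ V, ρ a ⟨t, h⟩)
    (hA : ChiNoncrossingOn (restChi V χ) ρ {x | x.1 ∈ Set.Icc lo t})
    (hH : ChiNoncrossingOn (restChi V χ) ρ {x | x.1 ∈ Set.Icc t hi}) :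
    ChiNoncrossingOn (restChi V χ) ρ {x | x.1 ∈ Set.Icc lo hi} := by
  intro s₁ ⟨hs₁, hs₁'⟩ r₁ ⟨hr₁, hr₁'⟩ s₂ ⟨hs₂, hs₂'⟩ r₂ ⟨hr₂, hr₂'⟩ h₁ h₂ h₃ hs hr
  rw [chiLT_restChi_iff] at h₁ h₂ h₃
  have k₁ := chiKey_cases ht s₁.1
  have k₂ := chiKey_cases ht r₁.1
  have k₃ := chiKey_cases ht s₂.1
  have k₄ := chiKey_cases ht r₂.1
  have kt : chiKey χ t = t := by simp [chiKey, ht]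
  obtain ⟨hT, hsT⟩ | hs_lt | hs_gt := exists_rel_or_same_side hsplit hs
  · have hTs₂ := ρ.trans (ρ.symm hsT) hs
    obtain ⟨_, hrT⟩ | hr_lt | hr_gt := exists_rel_or_same_side hsplit hr
    · exact ρ.trans hsT (ρ.symm hrT)
    · by_cases c₁ : s₁.1 ≤ t ∧ s₂.1 ≤ t
      · exact hA.rel_of_chiKey_lt s₁ r₁ s₂ r₂ (by omega) hs hr
      by_cases c₂ : t < s₁.1
      · exact ρ.trans hsT (hA.rel_of_chiKey_lt ⟨t, hT⟩ r₁ s₂ r₂ (by simp only; omega) hTs₂ hr)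
      · exact hA.rel_of_chiKey_lt s₁ r₁ ⟨t, hT⟩ r₂ (by simp only; omega) hsT hr
    · by_cases c₁ : t ≤ s₁.1
      · exact hH.rel_of_chiKey_lt s₁ r₁ s₂ r₂ (by omega) hs hr
      · exact ρ.trans hsT (hH.rel_of_chiKey_lt ⟨t, hT⟩ r₁ s₂ r₂ (by simp only; omega) hTs₂ hr)
  · obtain ⟨hT, hrT⟩ | hr_lt | hr_gt := exists_rel_or_same_side hsplit hr
    · have hTr₂ := ρ.trans (ρ.symm hrT) hr
      by_cases c₁ : r₁.1 ≤ t ∧ r₂.1 ≤ t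
      · exact hA.rel_of_chiKey_lt s₁ r₁ s₂ r₂ (by omega) hs hr
      by_cases c₂ : t < r₂.1
      · exact hA.rel_of_chiKey_lt s₁ r₁ s₂ ⟨t, hT⟩ (by simp only; omega) hs hrT
      · exact ρ.trans (hA.rel_of_chiKey_lt s₁ ⟨t, hT⟩ s₂ r₂ (by simp only; omega) hs hTr₂)
          (ρ.symm hrT)
    · exact hA.rel_of_chiKey_lt s₁ r₁ s₂ r₂ (by omega) hs hr
    · omega
  · obtain ⟨hT, hrT⟩ | hr_lt | hr_gt := exists_rel_or_same_side hsplit hr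
    · by_cases c₁ : t ≤ r₂.1
      · exact hH.rel_of_chiKey_lt s₁ r₁ s₂ r₂ (by omega) hs hr
      · exact ρ.trans
          (ρ.symm (hH.rel_of_chiKey_lt ⟨t, hT⟩ s₁ r₁ s₂ (by simp only; omega) (ρ.symm hrT) hs))
          (ρ.symm hrT)
    · omega
    · exact hH.rel_of_chiKey_lt s₁ r₁ s₂ r₂ (by omega) hs hr

end Noncrossing

section Pieces

variable {n m : ℕ} {V : Set (Fin n)} {l : Fin (m + 2) → Fin n} {χ : Fin n → Letter}

theorem chiNoncrossing_of_toPiece (hl : StrictMono l) (hl0 : ∀ x, l 0 ≤ x)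
    (hlast : ∀ x, x ≤ l (Fin.last _)) (hV : ∀ a b : V, ∀ p, a.1 < l p → l p < b.1 → l p ∈ V)
    (hjunction : ∀ a j b, a < j → j < b → (∃ p, j = l p) → χ j = Letter.c)
    {ρ : Setoid V} (hρ : IntervalAt V l ρ)
    (h : ∀ i, ChiNoncrossing (restChi (piece V l i) χ) (toPiece V l i ρ)) :
    ChiNoncrossing (restChi V χ) ρ := by
  suffices H : ∀ q, ChiNoncrossingOn (restChi V χ) ρ {x | x.1 ∈ Set.Icc (l 0) (l q)} from
    fun s₁ r₁ s₂ r₂ => H (Fin.last _) s₁ ⟨hl0 _, hlast _⟩ r₁ ⟨hl0 _, hlast _⟩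
      s₂ ⟨hl0 _, hlast _⟩ r₂ ⟨hl0 _, hlast _⟩
  intro q
  induction q using Fin.induction with
  | zero =>
    intro s₁ hs₁ r₁ hr₁ _ _ _ _ _ _ _ _ _
    rw [Subtype.ext ((hs₁.2.antisymm hs₁.1).trans (hr₁.2.antisymm hr₁.1).symm)]
  | succ q ih =>
    rcases eq_or_ne q 0 with rfl | hq
    · simpa using chiNoncrossingOn_of_toPiece (h 0)
    refine chiNoncrossingOn_Icc_of_split (hl0 _) (hl.monotone (Fin.castSucc_le_succ q))
      (hjunction _ _ _ (hl (Fin.castSucc_pos (Fin.pos_iff_ne_zero.2 hq)))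
        (hl (Fin.castSucc_lt_last q)) ⟨_, rfl⟩) (fun a b hat htb hab => ?_) ih
      (chiNoncrossingOn_of_toPiece (h q))
    exact ⟨hV a b _ hat htb, hρ a ⟨_, hV a b _ hat htb⟩ b ⟨_, rfl⟩ hat htb hab⟩

theorem intervalAt_of_chiInterval
    (hjunction : ∀ a j b, a < j → j < b → (∃ p, j = l p) → χ j = Letter.c)
    {ρ : Setoid V} (h : ChiInterval (restChi V χ) ρ) : IntervalAt V l ρ :=
  fun a t b ht hat htb => h a t b hat htb (hjunction a t b hat htb ht)

theorem chiInterval_of_intervalAt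
    (hcj : ∀ a j b, a < j → j < b → χ j = Letter.c → ∃ p, j = l p)
    {ρ : Setoid V} (h : IntervalAt V l ρ) : ChiInterval (restChi V χ) ρ :=
  fun a j b haj hjb hχ => h a j b (hcj a j b haj hjb hχ) haj hjb

theorem glue_mem_IBNC (hl : StrictMono l) (hl0 : ∀ x, l 0 ≤ x)
    (hlast : ∀ x, x ≤ l (Fin.last _)) (hV : ∀ a b : V, ∀ p, a.1 < l p → l p < b.1 → l p ∈ V)
    (hjunction : ∀ a j b, a < j → j < b → (∃ p, j = l p) → χ j = Letter.c)
    (hcj : ∀ a j b, a < j → j < b → χ j = Letter.c → ∃ p, j = l p)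
    {d : ∀ i, Setoid (piece V l i)} (hd : ∀ i, d i ∈ IBNC (restChi (piece V l i) χ)) :
    glue V l d ∈ IBNC (restChi V χ) :=
  ⟨chiNoncrossing_of_toPiece hl hl0 hlast hV hjunction (intervalAt_glue hl.monotone d)
      fun i => (toPiece_glue hl.monotone d i).symm ▸ (hd i).1,
    chiInterval_of_intervalAt hcj (intervalAt_glue hl.monotone d)⟩

end Pieces

theorem mobius_block_eq_prod_over_intervals_general (n m : ℕ) (χ : Fin n → Letter)
    (l : Fin (m + 2) → Fin n) (hmono : StrictMono l)
    (hl0 : (l 0 : ℕ) = 0) (hlast : (l (Fin.last (m + 1)) : ℕ) + 1 = n)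
    (hc : ∀ j : Fin n, (χ j = Letter.c ∧ 0 < (j : ℕ) ∧ (j : ℕ) + 2 ≤ n) ↔
      ∃ i : Fin (m + 2), 0 < (i : ℕ) ∧ (i : ℕ) < m + 1 ∧ j = l i)
    (π : Setoid (Fin n)) (hπ : π ∈ IBNC χ)
    (σ : Setoid (Fin n)) (hσ : σ ∈ IBNC χ)
    (x : Fin n)
    (muV : Setoid ({y | π x y} : Set (Fin n)) → Setoid ({y | π x y} : Set (Fin n)) → ℂ)
    (hmuV : IsMobius (IBNC (restChi {y | π x y} χ)) muV)
    (mui : ∀ i : Fin (m + 1),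
      Setoid (({y | π x y} ∩ Set.Icc (l i.castSucc) (l i.succ) : Set (Fin n))) →
      Setoid (({y | π x y} ∩ Set.Icc (l i.castSucc) (l i.succ) : Set (Fin n))) → ℂ)
    (hmui : ∀ i : Fin (m + 1),
      IsMobius (IBNC (restChi ({y | π x y} ∩ Set.Icc (l i.castSucc) (l i.succ)) χ)) (mui i)) :
    muV (restrict {y | π x y} σ) ⊤ =
      ∏ i : Fin (m + 1),
        mui i (restrict ({y | π x y} ∩ Set.Icc (l i.castSucc) (l i.succ)) σ) ⊤ := by
  set V : Set (Fin n) := {y | π x y}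
  have hl0' : ∀ y, l 0 ≤ y := fun y => by omega
  have hlast' : ∀ y, y ≤ l (Fin.last _) := fun y => by omega
  have hjunction : ∀ a j b, a < j → j < b → (∃ p, j = l p) → χ j = Letter.c := by
    rintro a j b haj hjb ⟨p, rfl⟩
    refine ((hc _).2 ⟨p, ?_, ?_, rfl⟩).1
    · have := hmono.lt_iff_lt.1 ((hl0' a).trans_lt haj)
      omega
    · have := hmono.lt_iff_lt.1 (hjb.trans_le (hlast' b))
      omega
  have hcj : ∀ a j b, a < j → j < b → χ j = Letter.c → ∃ p, j = l p := by
    intro a j b haj hjb hχ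
    obtain ⟨p, -, -, hp⟩ := (hc j).1 ⟨hχ, by omega, by omega⟩
    exact ⟨p, hp⟩
  have hV : ∀ a b : V, ∀ p, a.1 < l p → l p < b.1 → l p ∈ V := fun a b p hap hpb =>
    π.trans a.2 (hπ.2 a _ b hap hpb (hjunction _ _ _ hap hpb ⟨p, rfl⟩) (π.trans (π.symm a.2) b.2))
  have hle : ∀ ρ ∈ IBNC (restChi V χ), ∀ ρ', (∀ i, toPiece V l i ρ ≤ toPiece V l i ρ') → ρ ≤ ρ' :=
    fun ρ hρ _ => le_of_forall_toPiece_le hmono.monotone hl0' hlast' hV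
      (intervalAt_of_chiInterval hjunction hρ.2)
  refine IsMobius.apply_top_eq_prod (f := fun i => toPiece V l i) hmuV hmui (top_mem_IBNC _)
    (fun _ => top_mem_IBNC _) (fun _ hρ i => toPiece_mem_IBNC i hρ)
    (fun ρ hρ ρ' _ => ⟨fun h _ _ _ hab => h hab, hle ρ hρ ρ'⟩) (fun ρ hρ d hd => ?_)
    (comap_mem_IBNC (Subtype.strictMono_coe _) hσ)
  have hglue := toPiece_glue hmono.monotone d
  exact ⟨glue V l d, glue_mem_IBNC hmono hl0' hlast' hV hjunction hcj fun i => (hd i).1,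
    hle ρ hρ _ fun i => hglue i ▸ (hd i).2, hglue⟩

/-- With `χ⁻¹(c) ∩ {2,…,n−1} = {l₁ < ⋯ < l_m}`, `l₀ = 1`, `l_{m+1} = n`,
let `π, σ ∈ IBNC(χ)` with `σ ≤ π` and let `V` be a block of `π` (the block of the point
`x`).  Then `μ_{IBNC(χ|_V)}(σ|_V, 1_V) = ∏_{i=1}^{m+1} μ_{IBNC(χ|_{α̃ᵢ(V)})}(σ|_{α̃ᵢ(V)},
1_{α̃ᵢ(V)})`, where `α̃ᵢ(V) = V ∩ [l_{i-1}, l_i]` and `1_W = ⊤` is the one-block partition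
of `W` (with the convention `μ(∅,1_∅) = 1`, which is automatic here). -/
theorem mobius_block_eq_prod_over_intervals (n m : ℕ) (χ : Fin n → Letter)
    (l : Fin (m + 2) → Fin n) (hmono : StrictMono l)
    (hl0 : (l 0 : ℕ) = 0) (hlast : (l (Fin.last (m + 1)) : ℕ) + 1 = n)
    (hc : ∀ j : Fin n, (χ j = Letter.c ∧ 0 < (j : ℕ) ∧ (j : ℕ) + 2 ≤ n) ↔
      ∃ i : Fin (m + 2), 0 < (i : ℕ) ∧ (i : ℕ) < m + 1 ∧ j = l i)
    (π : Setoid (Fin n)) (hπ : π ∈ IBNC χ)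
    (σ : Setoid (Fin n)) (hσ : σ ∈ IBNC χ) (hle : σ ≤ π)
    (x : Fin n)
    (muV : Setoid ({y | π x y} : Set (Fin n)) → Setoid ({y | π x y} : Set (Fin n)) → ℂ)
    (hmuV : IsMobius (IBNC (restChi {y | π x y} χ)) muV)
    (mui : ∀ i : Fin (m + 1),
      Setoid (({y | π x y} ∩ Set.Icc (l i.castSucc) (l i.succ) : Set (Fin n))) →
      Setoid (({y | π x y} ∩ Set.Icc (l i.castSucc) (l i.succ) : Set (Fin n))) → ℂ)
    (hmui : ∀ i : Fin (m + 1),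
      IsMobius (IBNC (restChi ({y | π x y} ∩ Set.Icc (l i.castSucc) (l i.succ)) χ)) (mui i)) :
    muV (restrict {y | π x y} σ) ⊤ =
      ∏ i : Fin (m + 1),
        mui i (restrict ({y | π x y} ∩ Set.Icc (l i.castSucc) (l i.succ)) σ) ⊤ :=
  mobius_block_eq_prod_over_intervals_general n m χ l hmono hl0 hlast hc π hπ σ hσ x muV hmuV mui
    hmui

end FFB
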